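/- arXiv:1503.01694 — 7 statements merged into one kernel-verified Lean document; each statement's English description precedes it below -/
import Mathlib

section
/- Let A be a commutative ring that is a ℚ-algebra and let P : A → A be a ℚ-linear Rota–Baxter operator of weight zero. Then for every natural number n, (P 1)^n = n! • P^[n](1), where P^[n] denotes the n-fold iterate of P and n! • denotes scalar multiplication by the natural number n factorial. -/
lemma rb_aux (A : Type*) [CommRing A] [Algebra ℚ A] (P : A →ₗ[ℚ] A)
    (hRB : ∀ u v : A, P u * P v = P (u * P v) + P (P u * v)) :
    ∀ n : ℕ, P 1 * (⇑P)^[n] 1 = (n + 1) • (⇑P)^[n + 1] 1 := by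
  intro n
  induction n with
  | zero => simp
  | succ n ih =>
    rw [Function.iterate_succ_apply' (⇑P) n 1]
    rw [hRB 1 ((⇑P)^[n] 1)]
    rw [one_mul, ih, map_nsmul]
    rw [← Function.iterate_succ_apply' (⇑P) (n + 1) 1,
        ← Function.iterate_succ_apply' (⇑P) n 1]
    rw [← Function.iterate_succ_apply' (⇑P) (n + 1) 1]
    show (⇑P)^[n + 2] 1 + (n + 1) • (⇑P)^[n + 2] 1 = (n + 1 + 1) • (⇑P)^[n + 2] 1
    exact (add_comm _ _).trans (succ_nsmul _ _).symm

/-- For a Rota–Baxter operator `P` of weight zero on a commutative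
`ℚ`-algebra `A`, one has `(P 1)^n = n! • P^[n] 1` for every natural number `n`. -/
theorem pow_rotaBaxter_one_eq_factorial_smul_iterate
    (A : Type*) [CommRing A] [Algebra ℚ A] (P : A →ₗ[ℚ] A)
    (hRB : ∀ u v : A, P u * P v = P (u * P v) + P (P u * v)) (n : ℕ) :
    (P 1) ^ n = n.factorial • (⇑P)^[n] 1 := by
  induction n with
  | zero => simp
  | succ n ih =>
    rw [pow_succ, ih, smul_mul_assoc, mul_comm, rb_aux A P hRB n, smul_smul,
        Nat.factorial_succ, Nat.mul_comm]
end

section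
/- Let K be a field and let B be a commutative bialgebra over K with comultiplication Δ : B → B ⊗ B, counit ε : B → K and unit η : K → B. Let P : B → B be a K-linear map satisfying the horizontal substitution rule Δ ∘ P = (P ⊗ id) ∘ Δ + ((η ∘ ε) ⊗ id) ∘ Δ ∘ P. Define the K-linear maps T, N : B ⊗ B → B ⊗ B by T(f ⊗ g) = Σ f₍₁₎ ⊗ (f₍₂₎ · g) (in Sweedler notation, i.e. T = (id ⊗ mul) ∘ assoc ∘ (Δ ⊗ id)) and N(f ⊗ g) = 1 ⊗ (f · g). Then T ∘ (P ⊗ id) = (P ⊗ id) ∘ T + N ∘ (P ⊗ id) as linear maps on B ⊗ B. -/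
open TensorProduct

section Aux

open LinearMap

variable (K B : Type*) [Field K] [CommRing B] [Bialgebra K B] (P : B →ₗ[K] B)

private lemma aux2 : (LinearMap.rTensor B ((Algebra.linearMap K B) ∘ₗ Coalgebra.counit)) ∘ₗ
    (Coalgebra.comul (R := K) (A := B)) = TensorProduct.mk K B B 1 := by
  rw [rTensor_comp, comp_assoc, Coalgebra.rTensor_counit_comp_comul]
  ext b
  simp

private lemma aux3 : (LinearMap.lTensor B (LinearMap.mul' K B)) ∘ₗ
    (TensorProduct.assoc K B B B).toLinearMap ∘ₗ
    (LinearMap.rTensor B (TensorProduct.mk K B B 1)) =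
    (TensorProduct.mk K B B 1) ∘ₗ (LinearMap.mul' K B) := by
  ext f g
  simp

private lemma aux1 : (LinearMap.lTensor B (LinearMap.mul' K B)) ∘ₗ
    (TensorProduct.assoc K B B B).toLinearMap ∘ₗ
    (LinearMap.rTensor B (LinearMap.rTensor B P)) =
    (LinearMap.rTensor B P) ∘ₗ (LinearMap.lTensor B (LinearMap.mul' K B)) ∘ₗ
    (TensorProduct.assoc K B B B).toLinearMap := by
  ext a b c
  simp

private lemma aux1' : (LinearMap.lTensor B (LinearMap.mul' K B)) ∘ₗ
    (TensorProduct.assoc K B B B).toLinearMap ∘ₗ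
    (LinearMap.rTensor B (LinearMap.rTensor B P ∘ₗ Coalgebra.comul)) =
    (LinearMap.rTensor B P) ∘ₗ (LinearMap.lTensor B (LinearMap.mul' K B)) ∘ₗ
    (TensorProduct.assoc K B B B).toLinearMap ∘ₗ
    (LinearMap.rTensor B (Coalgebra.comul (R := K) (A := B))) := by
  have := congrArg (· ∘ₗ LinearMap.rTensor B (Coalgebra.comul (R := K) (A := B)))
    (aux1 K B P)
  simpa only [rTensor_comp, comp_assoc] using this

private lemma aux4 : (LinearMap.lTensor B (LinearMap.mul' K B)) ∘ₗ
    (TensorProduct.assoc K B B B).toLinearMap ∘ₗ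
    (LinearMap.rTensor B (LinearMap.rTensor B ((Algebra.linearMap K B) ∘ₗ Coalgebra.counit))) ∘ₗ
    (LinearMap.rTensor B (Coalgebra.comul (R := K) (A := B))) =
    (TensorProduct.mk K B B 1) ∘ₗ (LinearMap.mul' K B) := by
  rw [← rTensor_comp, aux2]
  exact aux3 K B

private lemma aux4' : (LinearMap.lTensor B (LinearMap.mul' K B)) ∘ₗ
    (TensorProduct.assoc K B B B).toLinearMap ∘ₗ
    (LinearMap.rTensor B (LinearMap.rTensor B ((Algebra.linearMap K B) ∘ₗ Coalgebra.counit) ∘ₗ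
      Coalgebra.comul ∘ₗ P)) =
    ((TensorProduct.mk K B B 1) ∘ₗ (LinearMap.mul' K B)) ∘ₗ (LinearMap.rTensor B P) := by
  have := congrArg (· ∘ₗ LinearMap.rTensor B P) (aux4 K B)
  simpa only [rTensor_comp, comp_assoc] using this

end Aux

/-- In a commutative bialgebra `B` over a field `K`, if a linear map
`P : B → B` satisfies the horizontal substitution rule
`Δ ∘ P = (P ⊗ id) ∘ Δ + ((η ∘ ε) ⊗ id) ∘ Δ ∘ P`, then for
`T (f ⊗ g) = Σ f₍₁₎ ⊗ (f₍₂₎ · g)` and `N (f ⊗ g) = 1 ⊗ (f·g)` we have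
`T ∘ (P ⊗ id) = (P ⊗ id) ∘ T + N ∘ (P ⊗ id)`. -/
theorem horizontal_substitution_transvection
    (K B : Type*) [Field K] [CommRing B] [Bialgebra K B]
    (P : B →ₗ[K] B)
    (hhor : Coalgebra.comul ∘ₗ P =
      (LinearMap.rTensor B P) ∘ₗ Coalgebra.comul +
      (LinearMap.rTensor B ((Algebra.linearMap K B) ∘ₗ Coalgebra.counit)) ∘ₗ
        Coalgebra.comul ∘ₗ P) :
    letI T : B ⊗[K] B →ₗ[K] B ⊗[K] B :=
      (LinearMap.lTensor B (LinearMap.mul' K B)) ∘ₗ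
        (TensorProduct.assoc K B B B).toLinearMap ∘ₗ
        (LinearMap.rTensor B (Coalgebra.comul (R := K) (A := B)))
    letI N : B ⊗[K] B →ₗ[K] B ⊗[K] B :=
      (TensorProduct.mk K B B 1) ∘ₗ (LinearMap.mul' K B)
    T ∘ₗ (LinearMap.rTensor B P) =
      (LinearMap.rTensor B P) ∘ₗ T + N ∘ₗ (LinearMap.rTensor B P) := by
  simp only [LinearMap.comp_assoc]
  rw [← LinearMap.rTensor_comp, hhor, LinearMap.rTensor_add]
  simp only [LinearMap.comp_add]
  rw [aux1' K B P, aux4' K B P]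
  simp only [LinearMap.comp_assoc]
end

section
/- Let K be a field and let B be a commutative bialgebra over K with comultiplication Δ, counit ε and unit η. Let P : B → B be a K-linear Rota–Baxter operator of weight zero satisfying the horizontal substitution rule Δ ∘ P = (P ⊗ id) ∘ Δ + ((η ∘ ε) ⊗ id) ∘ Δ ∘ P. Define the K-linear map L : B ⊗ B → B ⊗ B by L(f ⊗ g) = Σ (f · g₍₁₎) ⊗ g₍₂₎ (in Sweedler notation). Then (P ⊗ id) ∘ L ∘ (P ⊗ id) = L ∘ (P ⊗ id) ∘ (id ⊗ P) − (P ⊗ id) ∘ L ∘ (id ⊗ P) as linear maps on B ⊗ B. -/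
open TensorProduct

set_option synthInstance.maxHeartbeats 400000 in
/-- In a commutative bialgebra `B` over a field `K`, if `P : B → B` is a
Rota–Baxter operator of weight zero satisfying the horizontal substitution rule, then for
`L (f ⊗ g) = Σ (f · g₍₁₎) ⊗ g₍₂₎` one has
`(P ⊗ id) ∘ L ∘ (P ⊗ id) = L ∘ (P ⊗ id) ∘ (id ⊗ P) − (P ⊗ id) ∘ L ∘ (id ⊗ P)`. -/
theorem vertical_substitution_rule_bialgebra
    (K B : Type*) [Field K] [CommRing B] [Bialgebra K B]
    (P : B →ₗ[K] B)
    (hRB : ∀ u v : B, P u * P v = P (u * P v) + P (P u * v))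
    (hhor : Coalgebra.comul ∘ₗ P =
      (LinearMap.rTensor B P) ∘ₗ Coalgebra.comul +
      (LinearMap.rTensor B ((Algebra.linearMap K B) ∘ₗ Coalgebra.counit)) ∘ₗ
        Coalgebra.comul ∘ₗ P) :
    letI L : B ⊗[K] B →ₗ[K] B ⊗[K] B :=
      (LinearMap.rTensor B (LinearMap.mul' K B)) ∘ₗ
        (TensorProduct.assoc K B B B).symm.toLinearMap ∘ₗ
        (LinearMap.lTensor B (Coalgebra.comul (R := K) (A := B)))
    (LinearMap.rTensor B P) ∘ₗ L ∘ₗ (LinearMap.rTensor B P) =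
      L ∘ₗ (LinearMap.rTensor B P) ∘ₗ (LinearMap.lTensor B P) -
      (LinearMap.rTensor B P) ∘ₗ L ∘ₗ (LinearMap.lTensor B P) := by
  have hcounit : ∀ x : B,
      LinearMap.rTensor B ((Algebra.linearMap K B) ∘ₗ Coalgebra.counit)
        (Coalgebra.comul x) = (1 : B) ⊗ₜ[K] x := by
    intro x
    rw [LinearMap.rTensor_comp, LinearMap.comp_apply,
      Coalgebra.rTensor_counit_comul, LinearMap.rTensor_tmul]
    simp
  have hΔP : ∀ x : B,
      Coalgebra.comul (P x) =
        LinearMap.rTensor B P (Coalgebra.comul x) + (1 : B) ⊗ₜ[K] P x := by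
    intro x
    have := LinearMap.congr_fun hhor x
    simpa [hcounit (P x)] using this
  have key : ∀ (f : B) (c : B ⊗[K] B),
      LinearMap.rTensor B P ((LinearMap.rTensor B (LinearMap.mul' K B))
        ((TensorProduct.assoc K B B B).symm (P f ⊗ₜ c)))
      = (LinearMap.rTensor B (LinearMap.mul' K B))
          ((TensorProduct.assoc K B B B).symm (P f ⊗ₜ LinearMap.rTensor B P c))
        - LinearMap.rTensor B P ((LinearMap.rTensor B (LinearMap.mul' K B))
          ((TensorProduct.assoc K B B B).symm (f ⊗ₜ LinearMap.rTensor B P c))) := by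
    intro f c
    induction c using TensorProduct.induction_on with
    | zero => simp
    | tmul a b =>
        simp only [LinearMap.rTensor_tmul, TensorProduct.assoc_symm_tmul,
          LinearMap.mul'_apply]
        rw [hRB f a, add_tmul, add_sub_cancel_left]
    | add x y hx hy =>
        simp only [tmul_add, map_add, hx, hy]
        abel
  apply TensorProduct.ext'
  intro f g
  simp only [LinearMap.comp_apply, LinearMap.coe_comp, Function.comp_apply,
    LinearMap.sub_apply, LinearMap.rTensor_tmul, LinearMap.lTensor_tmul,
    LinearEquiv.coe_coe]
  rw [hΔP g]
  simp only [tmul_add, map_add, LinearMap.rTensor_tmul,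
    TensorProduct.assoc_symm_tmul, LinearMap.mul'_apply, mul_one]
  rw [key f (Coalgebra.comul g)]
  abel
end

section
/- Let K be a field and let B be a commutative and cocommutative bialgebra over K equipped with a scaling, i.e. a map σ : K → (B →ₐ[K] B) into the K-algebra endomorphisms of B respecting the coalgebra structure, such that σ(1) = id, σ(λμ) = σ(λ) ∘ σ(μ), σ(0) = η ∘ ε, and σ(λ + μ) = mul ∘ (σ(λ) ⊗ σ(μ)) ∘ Δ for all λ, μ ∈ K. For a 2×2 matrix M over K define the K-linear map M* : B ⊗ B → B ⊗ B by M*(f ⊗ g) = Σ (σ(M₁₁)f₍₁₎ · σ(M₂₁)g₍₁₎) ⊗ (σ(M₁₂)f₍₂₎ · σ(M₂₂)g₍₂₎) (Sweedler notation). Then for all 2×2 matrices M, N over K one has (M · N)* = N* ∘ M*, i.e. the assignment M ↦ M* is a contravariant monoid action of the multiplicative monoid of 2×2 matrices on B ⊗ B. -/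
open TensorProduct

/-- The induced action of a `2 × 2` matrix `M` on `B ⊗ B`, given in Sweedler notation by
`M* (f ⊗ g) = Σ (σ(M₁₁)f₍₁₎ · σ(M₂₁)g₍₁₎) ⊗ (σ(M₁₂)f₍₂₎ · σ(M₂₂)g₍₂₎)`. -/
noncomputable def inducedMatrixAction (K B : Type*) [Field K] [CommRing B] [Bialgebra K B]
    (σ : K → (B →ₐ[K] B)) (M : Matrix (Fin 2) (Fin 2) K) :
    B ⊗[K] B →ₗ[K] B ⊗[K] B :=
  (TensorProduct.map (LinearMap.mul' K B) (LinearMap.mul' K B)) ∘ₗ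
    (TensorProduct.tensorTensorTensorComm K B B B B).toLinearMap ∘ₗ
    (TensorProduct.map
      (TensorProduct.map (σ (M 0 0)).toLinearMap (σ (M 0 1)).toLinearMap)
      (TensorProduct.map (σ (M 1 0)).toLinearMap (σ (M 1 1)).toLinearMap)) ∘ₗ
    (TensorProduct.map (Coalgebra.comul (R := K) (A := B))
      (Coalgebra.comul (R := K) (A := B)))

/-! Write `E_{p,q} : B ⊗ B → B` (`scaledMul σ p q`) for `f ⊗ g ↦ σ(p)f · σ(q)g`. Then
`M* = (E_{M₁₁,M₂₁} ⊗ E_{M₁₂,M₂₂}) ∘ Δ` with `Δ` the comultiplication of the tensor product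
coalgebra `B ⊗ B`: the two legs of `M*` are indexed by the columns of `M`. Multiplicativity and
additivity of `σ` give `E_v ∘ M* = E_{M v}` for every column vector `v`. Cocommutativity makes
`Δ`, hence `M*`, a coalgebra map, so
`N* ∘ M* = (E_{N₁} ∘ M* ⊗ E_{N₂} ∘ M*) ∘ Δ = (E_{M N₁} ⊗ E_{M N₂}) ∘ Δ = (M N)*`. -/

open TensorProduct Coalgebra LinearMap

section

variable {K B : Type*} [Field K] [CommRing B] [Bialgebra K B] (σ : K → (B →ₐ[K] B))

noncomputable def scaledMul (p q : K) : B ⊗[K] B →ₗ[K] B :=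
  mul' K B ∘ₗ map (σ p).toLinearMap (σ q).toLinearMap

theorem inducedMatrixAction_eq_map_comp_comul (M : Matrix (Fin 2) (Fin 2) K) :
    inducedMatrixAction K B σ M =
      map (scaledMul σ (M 0 0) (M 1 0)) (scaledMul σ (M 0 1) (M 1 1)) ∘ₗ comul := by
  have hregroup : (map (mul' K B) (mul' K B) ∘ₗ (tensorTensorTensorComm K B B B B).toLinearMap) ∘ₗ
      map (map (σ (M 0 0)).toLinearMap (σ (M 0 1)).toLinearMap)
        (map (σ (M 1 0)).toLinearMap (σ (M 1 1)).toLinearMap) =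
      map (scaledMul σ (M 0 0) (M 1 0)) (scaledMul σ (M 0 1) (M 1 1)) ∘ₗ
        (tensorTensorTensorComm K B B B B).toLinearMap := by
    ext; simp [scaledMul]
  rw [inducedMatrixAction, ← comp_assoc, ← comp_assoc, hregroup, comp_assoc]
  rfl

theorem scaledMul_comp_inducedMatrixAction
    (hmul : ∀ lam mu : K, σ (lam * mu) = (σ lam).comp (σ mu))
    (hadd : ∀ lam mu : K, (σ (lam + mu)).toLinearMap =
      mul' K B ∘ₗ map (σ lam).toLinearMap (σ mu).toLinearMap ∘ₗ comul)
    (M : Matrix (Fin 2) (Fin 2) K) (p q : K) :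
    scaledMul σ p q ∘ₗ inducedMatrixAction K B σ M =
      scaledMul σ (p * M 0 0 + q * M 0 1) (p * M 1 0 + q * M 1 1) := by
  have hadd' (lam mu : K) : (σ (lam + mu)).toLinearMap = scaledMul σ lam mu ∘ₗ comul :=
    hadd lam mu
  have hcomp : scaledMul σ p q ∘ₗ map (mul' K B) (mul' K B) ∘ₗ
      (tensorTensorTensorComm K B B B B).toLinearMap ∘ₗ
        map (map (σ (M 0 0)).toLinearMap (σ (M 0 1)).toLinearMap)
          (map (σ (M 1 0)).toLinearMap (σ (M 1 1)).toLinearMap) =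
      mul' K B ∘ₗ
        map (scaledMul σ (p * M 0 0) (q * M 0 1)) (scaledMul σ (p * M 1 0) (q * M 1 1)) := by
    ext x y z w
    simp only [scaledMul, AlgebraTensorModule.curry_apply, curry_apply, restrictScalars_self,
      coe_comp, LinearEquiv.coe_coe, Function.comp_apply, map_tmul, tensorTensorTensorComm_tmul,
      AlgHom.toLinearMap_apply, mul'_apply, map_mul, hmul, AlgHom.comp_apply]
    ring
  conv_rhs => rw [scaledMul, hadd', hadd', map_comp, ← comp_assoc, ← hcomp]
  simp only [inducedMatrixAction, comp_assoc]

theorem comul_comp_inducedMatrixAction [IsCocomm K B]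
    (hσcomul : ∀ lam : K, comul ∘ₗ (σ lam).toLinearMap =
      map (σ lam).toLinearMap (σ lam).toLinearMap ∘ₗ comul)
    (hσcounit : ∀ lam : K, counit ∘ₗ (σ lam).toLinearMap = counit)
    (M : Matrix (Fin 2) (Fin 2) K) :
    comul ∘ₗ inducedMatrixAction K B σ M =
      map (inducedMatrixAction K B σ M) (inducedMatrixAction K B σ M) ∘ₗ comul := by
  let τ (lam : K) : B →ₗc[K] B :=
    { toLinearMap := (σ lam).toLinearMap
      counit_comp := hσcounit lam
      map_comp_comul := (hσcomul lam).symm }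
  let E (p q : K) : B ⊗[K] B →ₗc[K] B :=
    (Bialgebra.mulCoalgHom K B).comp (Coalgebra.TensorProduct.map (τ p) (τ q))
  rw [inducedMatrixAction_eq_map_comp_comul]
  exact ((Coalgebra.TensorProduct.map (E (M 0 0) (M 1 0)) (E (M 0 1) (M 1 1))).comp
    (comulCoalgHom K (B ⊗[K] B))).map_comp_comul.symm

end

theorem inducedMatrixAction_mul_general
    (K B : Type*) [Field K] [CommRing B] [Bialgebra K B]
    (hcocomm : (TensorProduct.comm K B B).toLinearMap ∘ₗ
        (Coalgebra.comul (R := K) (A := B)) = Coalgebra.comul)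
    (σ : K → (B →ₐ[K] B))
    (hσcomul : ∀ lam : K, (Coalgebra.comul (R := K) (A := B)) ∘ₗ (σ lam).toLinearMap =
      (TensorProduct.map (σ lam).toLinearMap (σ lam).toLinearMap) ∘ₗ Coalgebra.comul)
    (hσcounit : ∀ lam : K, (Coalgebra.counit (R := K) (A := B)) ∘ₗ (σ lam).toLinearMap =
      Coalgebra.counit)
    (hmul : ∀ lam mu : K, σ (lam * mu) = (σ lam).comp (σ mu))
    (hadd : ∀ lam mu : K, (σ (lam + mu)).toLinearMap =
      (LinearMap.mul' K B) ∘ₗ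
        (TensorProduct.map (σ lam).toLinearMap (σ mu).toLinearMap) ∘ₗ
        Coalgebra.comul)
    (M N : Matrix (Fin 2) (Fin 2) K) :
    inducedMatrixAction K B σ (M * N) =
      (inducedMatrixAction K B σ N) ∘ₗ (inducedMatrixAction K B σ M) := by
  have : IsCocomm K B := ⟨hcocomm⟩
  have hcolumn (j : Fin 2) : scaledMul σ ((M * N) 0 j) ((M * N) 1 j) =
      scaledMul σ (N 0 j) (N 1 j) ∘ₗ inducedMatrixAction K B σ M := by
    rw [scaledMul_comp_inducedMatrixAction σ hmul hadd]
    simp [Matrix.mul_apply, Fin.sum_univ_two, mul_comm]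
  rw [inducedMatrixAction_eq_map_comp_comul, hcolumn 0, hcolumn 1, map_comp, comp_assoc,
    ← comul_comp_inducedMatrixAction σ hσcomul hσcounit, ← comp_assoc,
    ← inducedMatrixAction_eq_map_comp_comul]

/-- For a commutative cocommutative bialgebra `B` over `K` with a
scaling `σ`, the induced matrix action on `B ⊗ B` is a contravariant monoid action of
the multiplicative monoid of `2 × 2` matrices: `(M · N)* = N* ∘ M*`. -/
theorem inducedMatrixAction_mul
    (K B : Type*) [Field K] [CommRing B] [Bialgebra K B]
    (hcocomm : (TensorProduct.comm K B B).toLinearMap ∘ₗ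
        (Coalgebra.comul (R := K) (A := B)) = Coalgebra.comul)
    (σ : K → (B →ₐ[K] B))
    (hσcomul : ∀ lam : K, (Coalgebra.comul (R := K) (A := B)) ∘ₗ (σ lam).toLinearMap =
      (TensorProduct.map (σ lam).toLinearMap (σ lam).toLinearMap) ∘ₗ Coalgebra.comul)
    (hσcounit : ∀ lam : K, (Coalgebra.counit (R := K) (A := B)) ∘ₗ (σ lam).toLinearMap =
      Coalgebra.counit)
    (hone : σ 1 = AlgHom.id K B)
    (hmul : ∀ lam mu : K, σ (lam * mu) = (σ lam).comp (σ mu))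
    (hzero : σ 0 = (Algebra.ofId K B).comp (Bialgebra.counitAlgHom K B))
    (hadd : ∀ lam mu : K, (σ (lam + mu)).toLinearMap =
      (LinearMap.mul' K B) ∘ₗ
        (TensorProduct.map (σ lam).toLinearMap (σ mu).toLinearMap) ∘ₗ
        Coalgebra.comul)
    (M N : Matrix (Fin 2) (Fin 2) K) :
    inducedMatrixAction K B σ (M * N) =
      (inducedMatrixAction K B σ N) ∘ₗ (inducedMatrixAction K B σ M) :=
  inducedMatrixAction_mul_general K B hcocomm σ hσcomul hσcounit hmul hadd M N
end

section
/- For every continuous function f : ℝ × ℝ → ℝ and all real numbers x and y, one has ∫ η in 0..x, (∫ ξ in 0..η, f (ξ, y + η)) = (∫ ξ in 0..x, ∫ η in 0..(x + y), f (ξ, η)) − ∫ ξ in 0..x, (∫ η in 0..(ξ + y), f (ξ, η)). -/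
open MeasureTheory Set intervalIntegral

lemma triangle_fubini_nonneg (g : ℝ × ℝ → ℝ) (hg : Continuous g) {x : ℝ} (hx : 0 ≤ x) :
    ∫ η in (0:ℝ)..x, ∫ ξ in (0:ℝ)..η, g (ξ, η) =
      ∫ ξ in (0:ℝ)..x, ∫ η in ξ..x, g (ξ, η) := by
  set T : Set (ℝ × ℝ) := {p | 0 ≤ p.1 ∧ p.1 ≤ p.2 ∧ p.2 ≤ x} with hT
  have hTm : MeasurableSet T := by
    apply MeasurableSet.inter
    · exact measurableSet_le measurable_const measurable_fst
    · exact (measurableSet_le measurable_fst measurable_snd).inter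
        (measurableSet_le measurable_snd measurable_const)
  set h : ℝ × ℝ → ℝ := T.indicator g with hh
  have hTsub : T ⊆ Icc 0 x ×ˢ Icc 0 x := by
    rintro ⟨a, b⟩ ⟨h1, h2, h3⟩
    exact ⟨⟨h1, h2.trans h3⟩, ⟨h1.trans h2, h3⟩⟩
  have hInt : Integrable h := by
    apply (IntegrableOn.integrable_indicator · hTm)
    exact ((hg.locallyIntegrable.integrableOn_isCompact
      (isCompact_Icc.prod isCompact_Icc)).mono_set hTsub)
  have hswap : (∫ ξ : ℝ, ∫ η : ℝ, h (ξ, η)) = ∫ η : ℝ, ∫ ξ : ℝ, h (ξ, η) := by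
    apply integral_integral_swap
    rw [← Measure.volume_eq_prod]
    exact hInt
  have hside2 : ∀ η : ℝ, (∫ ξ : ℝ, h (ξ, η)) =
      (Icc (0:ℝ) x).indicator (fun η => ∫ ξ in (0:ℝ)..η, g (ξ, η)) η := by
    intro η
    by_cases hη : η ∈ Icc (0:ℝ) x
    · rw [mem_Icc] at hη
      have e : (fun ξ => h (ξ, η)) = (Icc (0:ℝ) η).indicator (fun ξ => g (ξ, η)) := by
        funext ξ
        simp only [hh, Set.indicator_apply, hT, mem_setOf_eq, mem_Icc]
        by_cases hc : 0 ≤ ξ ∧ ξ ≤ η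
        · rw [if_pos ⟨hc.1, hc.2, hη.2⟩, if_pos hc]
        · rw [if_neg (fun hm => hc ⟨hm.1, hm.2.1⟩), if_neg hc]
      rw [indicator_of_mem (mem_Icc.2 hη), e, MeasureTheory.integral_indicator measurableSet_Icc,
        integral_Icc_eq_integral_Ioc, ← intervalIntegral.integral_of_le hη.1]
    · rw [indicator_of_notMem hη]
      rw [mem_Icc] at hη
      have e : (fun ξ => h (ξ, η)) = fun _ => (0:ℝ) := by
        funext ξ
        simp only [hh, Set.indicator_apply, hT, mem_setOf_eq]
        exact if_neg (fun hm => hη ⟨hm.1.trans hm.2.1, hm.2.2⟩)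
      rw [e]; simp
  have hside1 : ∀ ξ : ℝ, (∫ η : ℝ, h (ξ, η)) =
      (Icc (0:ℝ) x).indicator (fun ξ => ∫ η in ξ..x, g (ξ, η)) ξ := by
    intro ξ
    by_cases hξ : ξ ∈ Icc (0:ℝ) x
    · rw [mem_Icc] at hξ
      have e : (fun η => h (ξ, η)) = (Icc ξ x).indicator (fun η => g (ξ, η)) := by
        funext η
        simp only [hh, Set.indicator_apply, hT, mem_setOf_eq, mem_Icc]
        by_cases hc : ξ ≤ η ∧ η ≤ x
        · rw [if_pos ⟨hξ.1, hc.1, hc.2⟩, if_pos hc]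
        · rw [if_neg (fun hm => hc ⟨hm.2.1, hm.2.2⟩), if_neg hc]
      rw [indicator_of_mem (mem_Icc.2 hξ), e, MeasureTheory.integral_indicator measurableSet_Icc,
        integral_Icc_eq_integral_Ioc, ← intervalIntegral.integral_of_le hξ.2]
    · rw [indicator_of_notMem hξ]
      rw [mem_Icc] at hξ
      have e : (fun η => h (ξ, η)) = fun _ => (0:ℝ) := by
        funext η
        simp only [hh, Set.indicator_apply, hT, mem_setOf_eq]
        exact if_neg (fun hm => hξ ⟨hm.1, hm.2.1.trans hm.2.2⟩)
      rw [e]; simp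
  calc ∫ η in (0:ℝ)..x, ∫ ξ in (0:ℝ)..η, g (ξ, η)
      = ∫ η in Ioc (0:ℝ) x, ∫ ξ in (0:ℝ)..η, g (ξ, η) := intervalIntegral.integral_of_le hx
    _ = ∫ η in Icc (0:ℝ) x, ∫ ξ in (0:ℝ)..η, g (ξ, η) := integral_Icc_eq_integral_Ioc.symm
    _ = ∫ η : ℝ, (Icc (0:ℝ) x).indicator (fun η => ∫ ξ in (0:ℝ)..η, g (ξ, η)) η :=
        (MeasureTheory.integral_indicator measurableSet_Icc).symm
    _ = ∫ η : ℝ, ∫ ξ : ℝ, h (ξ, η) := (integral_congr_ae (.of_forall hside2)).symm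
    _ = ∫ ξ : ℝ, ∫ η : ℝ, h (ξ, η) := hswap.symm
    _ = ∫ ξ : ℝ, (Icc (0:ℝ) x).indicator (fun ξ => ∫ η in ξ..x, g (ξ, η)) ξ :=
        integral_congr_ae (.of_forall hside1)
    _ = ∫ ξ in Icc (0:ℝ) x, ∫ η in ξ..x, g (ξ, η) := MeasureTheory.integral_indicator measurableSet_Icc
    _ = ∫ ξ in Ioc (0:ℝ) x, ∫ η in ξ..x, g (ξ, η) := integral_Icc_eq_integral_Ioc
    _ = ∫ ξ in (0:ℝ)..x, ∫ η in ξ..x, g (ξ, η) := (intervalIntegral.integral_of_le hx).symm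

lemma triangle_fubini (g : ℝ × ℝ → ℝ) (hg : Continuous g) (x : ℝ) :
    ∫ η in (0:ℝ)..x, ∫ ξ in (0:ℝ)..η, g (ξ, η) =
      ∫ ξ in (0:ℝ)..x, ∫ η in ξ..x, g (ξ, η) := by
  rcases le_total 0 x with hx | hx
  · exact triangle_fubini_nonneg g hg hx
  · have hG : Continuous (fun p : ℝ × ℝ => g (-p.1, -p.2)) :=
      hg.comp (continuous_fst.neg.prodMk continuous_snd.neg)
    have key : (∫ η in (0:ℝ)..(-x), ∫ ξ in (0:ℝ)..η, g (-ξ, -η)) =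
        ∫ ξ in (0:ℝ)..(-x), ∫ η in ξ..(-x), g (-ξ, -η) :=
      triangle_fubini_nonneg (fun p => g (-p.1, -p.2)) hG (by linarith)
    have innerA : ∀ η : ℝ, (∫ ξ in (0:ℝ)..η, g (-ξ, -η)) =
        -∫ ξ in (0:ℝ)..(-η), g (ξ, -η) := by
      intro η
      rw [intervalIntegral.integral_comp_neg (fun ξ => g (ξ, -η)), neg_zero,
        intervalIntegral.integral_symm]
    have innerB : ∀ ξ : ℝ, (∫ η in ξ..(-x), g (-ξ, -η)) =
        -∫ η in (-ξ)..x, g (-ξ, η) := by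
      intro ξ
      rw [intervalIntegral.integral_comp_neg (fun η => g (-ξ, η)), neg_neg,
        intervalIntegral.integral_symm]
    have eA : (∫ η in (0:ℝ)..(-x), ∫ ξ in (0:ℝ)..η, g (-ξ, -η)) =
        -∫ η in (0:ℝ)..(-x), (fun η => ∫ ξ in (0:ℝ)..η, g (ξ, η)) (-η) := by
      rw [← intervalIntegral.integral_neg]
      exact intervalIntegral.integral_congr fun η _ => by simpa using innerA η
    have eB : (∫ ξ in (0:ℝ)..(-x), ∫ η in ξ..(-x), g (-ξ, -η)) =
        -∫ ξ in (0:ℝ)..(-x), (fun ξ => ∫ η in ξ..x, g (ξ, η)) (-ξ) := by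
      rw [← intervalIntegral.integral_neg]
      exact intervalIntegral.integral_congr fun ξ _ => by simpa using innerB ξ
    rw [eA, eB] at key
    rw [intervalIntegral.integral_comp_neg (fun η => ∫ ξ in (0:ℝ)..η, g (ξ, η)),
      intervalIntegral.integral_comp_neg (fun ξ => ∫ η in ξ..x, g (ξ, η))] at key
    simp only [neg_neg, neg_zero] at key
    rw [intervalIntegral.integral_symm 0 x, intervalIntegral.integral_symm 0 x] at key
    simpa using key


/-- Vertical substitution rule:
`∫₀ˣ ∫₀^η f(ξ, y+η) dξ dη = ∫₀ˣ ∫₀^{x+y} f(ξ,η) dη dξ − ∫₀ˣ ∫₀^{ξ+y} f(ξ,η) dη dξ`. -/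
theorem vertical_substitution_rule_integrals
    (f : ℝ × ℝ → ℝ) (hf : Continuous f) (x y : ℝ) :
    ∫ η in (0:ℝ)..x, (∫ ξ in (0:ℝ)..η, f (ξ, y + η)) =
      (∫ ξ in (0:ℝ)..x, ∫ η in (0:ℝ)..(x + y), f (ξ, η)) -
        ∫ ξ in (0:ℝ)..x, (∫ η in (0:ℝ)..(ξ + y), f (ξ, η)) := by
  have hfc : Continuous (Function.uncurry fun a b => f (a, b)) := hf
  have hcont1 : Continuous (fun ξ : ℝ => ∫ η in (0:ℝ)..(x + y), f (ξ, η)) :=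
    intervalIntegral.continuous_parametric_intervalIntegral_of_continuous' hfc 0 (x + y)
  have hcont2 : Continuous (fun ξ : ℝ => ∫ η in (0:ℝ)..(ξ + y), f (ξ, η)) :=
    intervalIntegral.continuous_parametric_intervalIntegral_of_continuous hfc
      (continuous_id.add continuous_const)
  rw [← intervalIntegral.integral_sub (hcont1.intervalIntegrable 0 x)
    (hcont2.intervalIntegrable 0 x)]
  have hdiff : ∀ ξ : ℝ, (∫ η in (0:ℝ)..(x + y), f (ξ, η)) -
      (∫ η in (0:ℝ)..(ξ + y), f (ξ, η)) = ∫ η in ξ..x, f (ξ, η + y) := by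
    intro ξ
    have hint : ∀ a b : ℝ, IntervalIntegrable (fun η => f (ξ, η)) volume a b := fun a b =>
      (hf.comp (continuous_const.prodMk continuous_id)).intervalIntegrable a b
    rw [intervalIntegral.integral_interval_sub_left (hint 0 (x + y)) (hint 0 (ξ + y)),
      intervalIntegral.integral_comp_add_right (fun η => f (ξ, η)) y]
  have hL : (∫ η in (0:ℝ)..x, ∫ ξ in (0:ℝ)..η, f (ξ, y + η)) =
      ∫ η in (0:ℝ)..x, ∫ ξ in (0:ℝ)..η, f (ξ, η + y) :=
    intervalIntegral.integral_congr fun η _ => by rw [add_comm y η]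
  rw [intervalIntegral.integral_congr fun ξ _ => hdiff ξ, hL]
  exact triangle_fubini (fun p => f (p.1, p.2 + y))
    (hf.comp (continuous_fst.prodMk (continuous_snd.add continuous_const))) x
end

section
/- For all continuous functions g : ℝ → ℝ and f : ℝ × ℝ → ℝ and all real numbers x and y, one has ∫ η in 0..x, g(η) · (∫ ξ in 0..η, f (ξ, y + η)) = (∫ ξ in 0..x, ∫ η in 0..(x + y), g(η − y) · f (ξ, η)) − ∫ ξ in 0..x, (∫ η in 0..(ξ + y), g(η − y) · f (ξ, η)). -/
open MeasureTheory Set intervalIntegral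

private lemma tri_nonneg (h : ℝ → ℝ → ℝ) (hh : Continuous fun p : ℝ × ℝ => h p.1 p.2)
    {x : ℝ} (hx : 0 ≤ x) :
    ∫ u in (0:ℝ)..x, ∫ ξ in (0:ℝ)..u, h ξ u = ∫ ξ in (0:ℝ)..x, ∫ u in ξ..x, h ξ u := by
  set F : ℝ → ℝ → ℝ := fun u ξ => if ξ < u then h ξ u else 0 with hF
  have hint : Integrable (fun p : ℝ × ℝ => F p.1 p.2)
      ((volume.restrict (Ioc 0 x)).prod (volume.restrict (Ioc 0 x))) := by
    have hmeq : (volume.restrict (Ioc 0 x)).prod (volume.restrict (Ioc (0:ℝ) x)) =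
        (volume : Measure (ℝ × ℝ)).restrict (Ioc 0 x ×ˢ Ioc 0 x) := by
      rw [Measure.prod_restrict, ← Measure.volume_eq_prod]
    have hG : Integrable (fun p : ℝ × ℝ => h p.2 p.1)
        ((volume.restrict (Ioc 0 x)).prod (volume.restrict (Ioc 0 x))) := by
      rw [hmeq]
      have hcpt : IsCompact (Icc (0:ℝ) x ×ˢ Icc (0:ℝ) x) := isCompact_Icc.prod isCompact_Icc
      refine (ContinuousOn.integrableOn_compact hcpt
        ((hh.comp (continuous_snd.prodMk continuous_fst)).continuousOn)).mono_set ?_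
      exact Set.prod_mono Ioc_subset_Icc_self Ioc_subset_Icc_self
    have : (fun p : ℝ × ℝ => F p.1 p.2) =
        Set.indicator {p : ℝ × ℝ | p.2 < p.1} (fun p => h p.2 p.1) := by
      ext p
      simp only [hF, Set.indicator_apply, Set.mem_setOf_eq]
    rw [this]
    exact hG.indicator (measurableSet_lt measurable_snd measurable_fst)
  have step1 : ∫ u in (0:ℝ)..x, ∫ ξ in (0:ℝ)..u, h ξ u
      = ∫ u in Ioc (0:ℝ) x, ∫ ξ in Ioc (0:ℝ) x, F u ξ := by
    rw [integral_of_le hx]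
    refine setIntegral_congr_fun measurableSet_Ioc (fun u hu => ?_)
    have hux : u ≤ x := hu.2
    have : ∫ ξ in Ioc (0:ℝ) x, F u ξ = ∫ ξ in Ioc (0:ℝ) x ∩ Iio u, h ξ u := by
      rw [← setIntegral_indicator measurableSet_Iio]
      refine setIntegral_congr_fun measurableSet_Ioc (fun ξ _ => ?_)
      simp [hF, Set.indicator_apply]
    have hset : Ioc (0:ℝ) x ∩ Iio u = Ioo 0 u := by
      ext ξ
      simp only [mem_inter_iff, mem_Ioc, mem_Iio, mem_Ioo]
      exact ⟨fun ⟨⟨h1, _⟩, h3⟩ => ⟨h1, h3⟩, fun ⟨h1, h2⟩ => ⟨⟨h1, h2.le.trans hux⟩, h2⟩⟩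
    rw [this, hset, integral_of_le hu.1.le, integral_Ioc_eq_integral_Ioo]
  have step2 : ∫ ξ in (0:ℝ)..x, ∫ u in ξ..x, h ξ u
      = ∫ ξ in Ioc (0:ℝ) x, ∫ u in Ioc (0:ℝ) x, F u ξ := by
    rw [integral_of_le hx]
    refine setIntegral_congr_fun measurableSet_Ioc (fun ξ hξ => ?_)
    have : ∫ u in Ioc (0:ℝ) x, F u ξ = ∫ u in Ioc (0:ℝ) x ∩ Ioi ξ, h ξ u := by
      rw [← setIntegral_indicator measurableSet_Ioi]
      refine setIntegral_congr_fun measurableSet_Ioc (fun u _ => ?_)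
      simp [hF, Set.indicator_apply, mem_Ioi]
    have hset : Ioc (0:ℝ) x ∩ Ioi ξ = Ioc ξ x := by
      ext u
      simp only [mem_inter_iff, mem_Ioc, mem_Ioi]
      exact ⟨fun ⟨⟨_, h2⟩, h3⟩ => ⟨h3, h2⟩, fun ⟨h1, h2⟩ => ⟨⟨hξ.1.trans h1, h2⟩, h1⟩⟩
    rw [integral_of_le hξ.2, this, hset]
  rw [step1, step2]
  exact integral_integral_swap hint

private lemma tri (h : ℝ → ℝ → ℝ) (hh : Continuous fun p : ℝ × ℝ => h p.1 p.2) (x : ℝ) :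
    ∫ u in (0:ℝ)..x, ∫ ξ in (0:ℝ)..u, h ξ u = ∫ ξ in (0:ℝ)..x, ∫ u in ξ..x, h ξ u := by
  rcases le_total 0 x with hx | hx
  · exact tri_nonneg h hh hx
  · have key := tri_nonneg (fun ξ u => h (-ξ) (-u))
      (by exact hh.comp ((continuous_fst.neg).prodMk (continuous_snd.neg))) (neg_nonneg.2 hx)
    have l1 : ∫ u in (0:ℝ)..(-x), ∫ ξ in (0:ℝ)..u, h (-ξ) (-u)
        = ∫ u in (0:ℝ)..x, ∫ ξ in (0:ℝ)..u, h ξ u := by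
      have inner : ∀ u : ℝ, ∫ ξ in (0:ℝ)..u, h (-ξ) (-u)
          = -∫ ξ in (0:ℝ)..(-u), h ξ (-u) := by
        intro u
        rw [integral_comp_neg (fun ξ => h ξ (-u)), neg_zero, integral_symm]
      simp_rw [inner]
      rw [intervalIntegral.integral_neg]
      have := integral_comp_neg (fun u => ∫ ξ in (0:ℝ)..u, h ξ u) (a := 0) (b := -x)
      simp only [neg_neg, neg_zero] at this
      rw [this, integral_symm, neg_neg]
    have l2 : ∫ ξ in (0:ℝ)..(-x), ∫ u in ξ..(-x), h (-ξ) (-u)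
        = ∫ ξ in (0:ℝ)..x, ∫ u in ξ..x, h ξ u := by
      have inner : ∀ ξ : ℝ, ∫ u in ξ..(-x), h (-ξ) (-u)
          = -∫ u in (-ξ)..x, h (-ξ) u := by
        intro ξ
        rw [integral_comp_neg (fun u => h (-ξ) u), neg_neg, integral_symm]
      simp_rw [inner]
      rw [intervalIntegral.integral_neg]
      have := integral_comp_neg (fun ξ => ∫ u in ξ..x, h ξ u) (a := 0) (b := -x)
      simp only [neg_neg, neg_zero] at this
      rw [this, integral_symm, neg_neg]
    rw [← l1, ← l2]
    exact key

/-- Vertical substitution rule with a coefficient function `g`. -/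
theorem vertical_substitution_rule_coefficient
    (g : ℝ → ℝ) (hg : Continuous g) (f : ℝ × ℝ → ℝ) (hf : Continuous f) (x y : ℝ) :
    ∫ η in (0:ℝ)..x, g η * (∫ ξ in (0:ℝ)..η, f (ξ, y + η)) =
      (∫ ξ in (0:ℝ)..x, ∫ η in (0:ℝ)..(x + y), g (η - y) * f (ξ, η)) -
        ∫ ξ in (0:ℝ)..x, (∫ η in (0:ℝ)..(ξ + y), g (η - y) * f (ξ, η)) := by
  -- continuity of the combined integrand
  have hc : Continuous fun p : ℝ × ℝ => g p.2 * f (p.1, y + p.2) :=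
    (hg.comp continuous_snd).mul
      (hf.comp (continuous_fst.prodMk (continuous_const.add continuous_snd)))
  -- integrability facts for the two outer integrands on the RHS
  have hI1 : IntervalIntegrable (fun ξ => ∫ η in (0:ℝ)..(x + y), g (η - y) * f (ξ, η))
      volume 0 x := by
    apply Continuous.intervalIntegrable
    exact intervalIntegral.continuous_parametric_intervalIntegral_of_continuous'
      (f := fun ξ η => g (η - y) * f (ξ, η))
      (((hg.comp (continuous_snd.sub continuous_const)).mul
        (hf.comp (continuous_fst.prodMk continuous_snd)))) 0 (x + y)
  have hI2 : IntervalIntegrable (fun ξ => ∫ η in (0:ℝ)..(ξ + y), g (η - y) * f (ξ, η))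
      volume 0 x := by
    apply Continuous.intervalIntegrable
    exact intervalIntegral.continuous_parametric_intervalIntegral_of_continuous
      (f := fun ξ η => g (η - y) * f (ξ, η))
      (((hg.comp (continuous_snd.sub continuous_const)).mul
        (hf.comp (continuous_fst.prodMk continuous_snd))))
      (continuous_id.add continuous_const)
  rw [← intervalIntegral.integral_sub hI1 hI2]
  -- substitute η ↦ η - y in the inner integrals
  have subst : ∀ ξ : ℝ,
      (∫ η in (0:ℝ)..(x + y), g (η - y) * f (ξ, η)) -
        (∫ η in (0:ℝ)..(ξ + y), g (η - y) * f (ξ, η))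
      = ∫ u in ξ..x, g u * f (ξ, y + u) := by
    intro ξ
    have e1 : (∫ η in (0:ℝ)..(x + y), g (η - y) * f (ξ, η))
        = ∫ u in (-y)..x, g u * f (ξ, y + u) := by
      have := intervalIntegral.integral_comp_sub_right
        (f := fun u => g u * f (ξ, y + u)) (a := 0) (b := x + y) y
      simp only [zero_sub, add_sub_cancel_right] at this
      rw [← this]
      refine intervalIntegral.integral_congr (fun η _ => ?_)
      simp [add_sub_cancel]
    have e2 : (∫ η in (0:ℝ)..(ξ + y), g (η - y) * f (ξ, η))
        = ∫ u in (-y)..ξ, g u * f (ξ, y + u) := by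
      have := intervalIntegral.integral_comp_sub_right
        (f := fun u => g u * f (ξ, y + u)) (a := 0) (b := ξ + y) y
      simp only [zero_sub, add_sub_cancel_right] at this
      rw [← this]
      refine intervalIntegral.integral_congr (fun η _ => ?_)
      simp [add_sub_cancel]
    rw [e1, e2]
    have hInt : ∀ a b : ℝ, IntervalIntegrable (fun u => g u * f (ξ, y + u)) volume a b :=
      fun a b => (hg.mul (hf.comp ((continuous_const.prodMk
        (continuous_const.add continuous_id))))).intervalIntegrable a b
    exact intervalIntegral.integral_interval_sub_left (hInt _ _) (hInt _ _)
  simp_rw [subst]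
  -- pull `g` inside the inner integral on the LHS
  have pull : ∀ η : ℝ, g η * (∫ ξ in (0:ℝ)..η, f (ξ, y + η))
      = ∫ ξ in (0:ℝ)..η, g η * f (ξ, y + η) := by
    intro η
    rw [← intervalIntegral.integral_const_mul]
  simp_rw [pull]
  exact tri (fun ξ u => g u * f (ξ, y + u))
    ((hg.comp continuous_snd).mul
      (hf.comp (continuous_fst.prodMk (continuous_const.add continuous_snd)))) x
end

section
/- Let K be a field, n a natural number, and i < j two indices. For a vector w ∈ K^n with w_k = 0 for all k ≤ i and a vector u ∈ K^n with u_k = 0 for all k ≤ j, define the eliminants L_i(w) = I_n + Σ_k w_k · E_{k,i} and L_j(u) = I_n + Σ_k u_k · E_{k,j}, where E_{k,i} is the matrix unit with a single entry 1 in row k and column i. Then L_j(u) · L_i(w) = L_i(w') · L_j(u), where w' ∈ K^n is the vector with w'_k = w_k + u_k · w_j for k > j and w'_k = w_k otherwise. -/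
def eliminant {K : Type*} [Field K] {n : ℕ} (i : Fin n) (w : Fin n → K) :
    Matrix (Fin n) (Fin n) K :=
  1 + ∑ k : Fin n, Matrix.single k i (w k)

open Matrix

section

variable {K : Type*} [Field K] {n : ℕ}

theorem eliminant_eq_one_add_vecMulVec (i : Fin n) (w : Fin n → K) :
    eliminant i w = 1 + vecMulVec w (Pi.single i 1) := by
  ext a b
  simp [eliminant, Matrix.sum_apply, vecMulVec_apply, single_apply, Pi.single_apply, ite_and,
    eq_comm]

/-- With `L_i(w) = 1 + w eᵢᵀ`, the cross term of `L_j(u) L_i(w)` is `w_j · u eᵢᵀ`, while that of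
`L_i(w + w_j u) L_j(u)` is `u_i · (w + w_j u) eⱼᵀ`. -/
theorem eliminant_mul_eliminant_of_apply_eq_zero {i j : Fin n} {w u : Fin n → K}
    (hu : u i = 0) :
    eliminant j u * eliminant i w = eliminant i (w + w j • u) * eliminant j u := by
  simp only [eliminant_eq_one_add_vecMulVec, add_mul, mul_add, one_mul, mul_one,
    vecMulVec_mul_vecMulVec, single_one_dotProduct, hu, zero_smul, vecMulVec_zero, add_zero,
    add_vecMulVec, smul_vecMulVec, smul_mul_assoc, vecMulVec_smul, smul_zero]
  abel

end

theorem eliminant_mul_eliminant_descending_general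
    (K : Type*) [Field K] (n : ℕ) (i j : Fin n) (hij : i < j)
    (w u : Fin n → K)
    (hu : ∀ k : Fin n, k ≤ j → u k = 0) :
    eliminant j u * eliminant i w =
      eliminant i (fun k => if j < k then w k + u k * w j else w k) * eliminant j u := by
  have hw_eq : (fun k => if j < k then w k + u k * w j else w k) = w + w j • u := by
    ext k
    split_ifs with hjk
    · simp [mul_comm]
    · simp [hu k (not_lt.mp hjk)]
  rw [hw_eq, eliminant_mul_eliminant_of_apply_eq_zero (hu i hij.le)]

/-- For `i < j`, the product of eliminants in descending order can be
reordered: `L_j(u) · L_i(w) = L_i(w') · L_j(u)`, where `w'_k = w_k + u_k · w_j` for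
`k > j` and `w'_k = w_k` otherwise. -/
theorem eliminant_mul_eliminant_descending
    (K : Type*) [Field K] (n : ℕ) (i j : Fin n) (hij : i < j)
    (w u : Fin n → K)
    (hw : ∀ k : Fin n, k ≤ i → w k = 0)
    (hu : ∀ k : Fin n, k ≤ j → u k = 0) :
    eliminant j u * eliminant i w =
      eliminant i (fun k => if j < k then w k + u k * w j else w k) * eliminant j u :=
  eliminant_mul_eliminant_descending_general K n i j hij w u hu
end
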